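/- arXiv:1512.08681 — 2 statements merged into one kernel-verified Lean document; each statement's English description precedes it below -/
import Mathlib

section
/- Let 1 < q < r·q = p < ∞ with r = p/q, and let Φ be a Young function with Φ ∈ B_q^*. Suppose that for every nonnegative g ∈ L^{r'}(ℝⁿ) with ‖g‖_{L^{r'}} = 1 the pointwise Fefferman–Stein inequality ∫ M_{𝓡,Φ}f(x)^q |g(x)| dx ≤ C ∫ |f(x)|^q M_𝓡 g(x) dx holds and M_𝓡 is bounded on L^{r'}(ℝⁿ). Then the vector-valued inequality ‖(Σ_j (M_{𝓡,Φ}f_j)^q)^{1/q}‖_{L^p(ℝⁿ)} ≤ C' ‖(Σ_j |f_j|^q)^{1/q}‖_{L^p(ℝⁿ)} holds. -/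
open MeasureTheory Set
open scoped ENNReal

noncomputable section

structure IsYoung (Φ : ℝ → ℝ) : Prop where
  cont : ContinuousOn Φ (Set.Ici 0)
  convex : ConvexOn ℝ (Set.Ici 0) Φ
  mono : MonotoneOn Φ (Set.Ici 0)
  zero : Φ 0 = 0
  tendsto : Filter.Tendsto Φ Filter.atTop Filter.atTop

/-- An axis-parallel rectangle in `ℝⁿ`. -/
def IsRect {n : ℕ} (R : Set (Fin n → ℝ)) : Prop :=
  ∃ a b : Fin n → ℝ, (∀ i, a i < b i) ∧
    R = Set.univ.pi fun i => Set.Ioo (a i) (b i)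

/-- The normalized Luxemburg norm of `f` over `E`. -/
def luxNorm {n : ℕ} (Φ : ℝ → ℝ) (E : Set (Fin n → ℝ)) (f : (Fin n → ℝ) → ℝ) : ℝ :=
  sInf {l : ℝ | 0 < l ∧ (volume E).toReal⁻¹ * ∫ x in E, Φ (|f x| / l) ≤ 1}

/-- The strong maximal operator `M_𝓡`. -/
def MRstrong {n : ℕ} (g : (Fin n → ℝ) → ℝ) (x : Fin n → ℝ) : ℝ≥0∞ :=
  ⨆ (R : Set (Fin n → ℝ)) (_ : IsRect R ∧ x ∈ R),
    (volume R)⁻¹ * ∫⁻ y in R, ENNReal.ofReal |g y|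

/-- The Orlicz strong maximal operator `M_{𝓡,Φ}`. -/
def MROrlicz {n : ℕ} (Φ : ℝ → ℝ) (f : (Fin n → ℝ) → ℝ) (x : Fin n → ℝ) : ℝ≥0∞ :=
  ⨆ (R : Set (Fin n → ℝ)) (_ : IsRect R ∧ x ∈ R), ENNReal.ofReal (luxNorm Φ R f)

/-- `Φ_n(t) = t (1 + (log⁺ t)^{n-1})`. -/
def PhiN (n : ℕ) (t : ℝ) : ℝ := t * (1 + (max (Real.log t) 0) ^ (n - 1))

/-- The `B_q^*` condition: `∫_c^∞ Φ_n(Φ(t)) t^{-q} dt/t < ∞` for some `c > 0`. -/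
def BqStar (n : ℕ) (q : ℝ) (Φ : ℝ → ℝ) : Prop :=
  ∃ c : ℝ, 0 < c ∧ IntegrableOn (fun t : ℝ => PhiN n (Φ t) / t ^ (q + 1)) (Set.Ioi c)

lemma isOpen_of_isRect {n : ℕ} {R : Set (Fin n → ℝ)} (h : IsRect R) : IsOpen R := by
  obtain ⟨a, b, -, rfl⟩ := h
  exact isOpen_set_pi Set.finite_univ (fun i _ => isOpen_Ioo)

lemma measurable_maximal {n : ℕ} (c : Set (Fin n → ℝ) → ℝ≥0∞) :
    Measurable (fun x => ⨆ (R : Set (Fin n → ℝ)) (_ : IsRect R ∧ x ∈ R), c R) := by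
  apply LowerSemicontinuous.measurable
  intro x a ha
  change a < ⨆ (R : Set (Fin n → ℝ)) (_ : IsRect R ∧ x ∈ R), c R at ha
  rw [lt_iSup_iff] at ha
  obtain ⟨R, hR⟩ := ha
  rw [lt_iSup_iff] at hR
  obtain ⟨⟨hrect, hx⟩, hc⟩ := hR
  filter_upwards [(isOpen_of_isRect hrect).mem_nhds hx] with y hy
  exact hc.trans_le (le_iSup₂ (f := fun R (_ : IsRect R ∧ y ∈ R) => c R) R ⟨hrect, hy⟩)

lemma holder_general {α : Type*} [MeasurableSpace α] (μ : Measure α) {p q : ℝ}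
    (hpq : p.HolderConjugate q) (G h : α → ℝ≥0∞) (hh : Measurable h) (hfin : ∀ x, h x ≠ ⊤) :
    ∫⁻ x, G x * h x ∂μ ≤ (∫⁻ x, G x ^ p ∂μ) ^ (1/p) * (∫⁻ x, h x ^ q ∂μ) ^ (1/q) := by
  obtain ⟨φ, φm, φle, hφ⟩ := exists_measurable_le_lintegral_eq μ (fun x => G x * h x)
  rw [hφ]
  set ψ : α → ℝ≥0∞ := fun x => φ x / h x with hψ
  have hψm : Measurable ψ := φm.div hh
  have hψle : ∀ x, ψ x ≤ G x := by
    intro x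
    by_cases h0 : h x = 0
    · have : φ x = 0 := le_antisymm (by simpa [h0] using φle x) bot_le
      simp [hψ, this]
    · exact (ENNReal.div_le_iff h0 (hfin x)).2 (φle x)
  have key : ∀ x, φ x = ψ x * h x := by
    intro x
    by_cases h0 : h x = 0
    · have : φ x = 0 := le_antisymm (by simpa [h0] using φle x) bot_le
      simp [h0, this]
    · exact (ENNReal.div_mul_cancel h0 (hfin x)).symm
  calc ∫⁻ x, φ x ∂μ = ∫⁻ x, (ψ * h) x ∂μ := lintegral_congr key
    _ ≤ (∫⁻ x, ψ x ^ p ∂μ) ^ (1/p) * (∫⁻ x, h x ^ q ∂μ) ^ (1/q) :=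
        ENNReal.lintegral_mul_le_Lp_mul_Lq μ hpq hψm.aemeasurable hh.aemeasurable
    _ ≤ _ := by
        refine mul_le_mul_left (ENNReal.rpow_le_rpow ?_ (by have := hpq.pos; positivity)) _
        exact lintegral_mono fun x => ENNReal.rpow_le_rpow (hψle x) hpq.pos.le

lemma tsum_lintegral_le' {α : Type*} [MeasurableSpace α] (μ : Measure α) (h : ℕ → α → ℝ≥0∞) :
    ∑' j, ∫⁻ x, h j x ∂μ ≤ ∫⁻ x, ∑' j, h j x ∂μ := by
  rw [ENNReal.tsum_eq_iSup_sum]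
  refine iSup_le fun s => ?_
  have hs : ∑ j ∈ s, ∫⁻ x, h j x ∂μ ≤ ∫⁻ x, ∑ j ∈ s, h j x ∂μ := by
    classical
    induction s using Finset.induction_on with
    | empty => simp
    | insert j s hj ih =>
      rw [Finset.sum_insert hj]
      refine ((add_le_add_right ih _).trans (le_lintegral_add _ _)).trans_eq ?_
      congr 1; funext x; rw [Finset.sum_insert hj]
  exact hs.trans (lintegral_mono fun x => ENNReal.sum_le_tsum s)

/-- Vector-valued Fefferman–Stein transfer for the Orlicz strong maximal operator. -/
theorem stmt12 (n : ℕ) (hn : 1 ≤ n) (p q r : ℝ) (hq : 1 < q) (hqp : q < p) (hr : r = p / q)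
    (Φ : ℝ → ℝ) (hΦ : IsYoung Φ) (hB : BqStar n q Φ)
    -- the pointwise Fefferman–Stein inequality for every normalized nonnegative g ∈ L^{r'}
    (hFS : ∃ C : ℝ≥0∞, C ≠ ⊤ ∧ ∀ g : (Fin n → ℝ) → ℝ, (∀ x, 0 ≤ g x) →
      (∫⁻ x, ENNReal.ofReal (g x) ^ (r / (r - 1))) = 1 →
      ∀ f : (Fin n → ℝ) → ℝ,
        (∫⁻ x, MROrlicz Φ f x ^ q * ENNReal.ofReal (g x)) ≤
          C * ∫⁻ x, ENNReal.ofReal |f x| ^ q * MRstrong g x)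
    -- M_𝓡 is bounded on L^{r'}(ℝⁿ)
    (hMR : ∃ C : ℝ≥0∞, C ≠ ⊤ ∧ ∀ g : (Fin n → ℝ) → ℝ,
      (∫⁻ x, MRstrong g x ^ (r / (r - 1))) ^ ((r - 1) / r) ≤
        C * (∫⁻ x, ENNReal.ofReal |g x| ^ (r / (r - 1))) ^ ((r - 1) / r)) :
    ∃ C' : ℝ≥0∞, C' ≠ ⊤ ∧ ∀ f : ℕ → (Fin n → ℝ) → ℝ,
      (∫⁻ x, (∑' j, MROrlicz Φ (f j) x ^ q) ^ (p / q)) ^ (1 / p) ≤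
        C' * (∫⁻ x, (∑' j, ENNReal.ofReal |f j x| ^ q) ^ (p / q)) ^ (1 / p) := by
  obtain ⟨C, hC, hFS⟩ := hFS
  obtain ⟨CM, hCM, hMR⟩ := hMR
  have hq0 : (0:ℝ) < q := lt_trans one_pos hq
  have hp0 : (0:ℝ) < p := lt_trans hq0 hqp
  have hr1 : 1 < r := by rw [hr, lt_div_iff₀ hq0]; linarith
  have hr0 : (0:ℝ) < r := lt_trans one_pos hr1
  have hconj : r.HolderConjugate (r / (r - 1)) := Real.HolderConjugate.conjExponent hr1
  have hr'0 : (0:ℝ) < r / (r - 1) := hconj.symm.pos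
  have hinvsum : 1/r + 1/(r/(r-1)) = 1 := by
    rw [one_div, one_div]; exact hconj.inv_add_inv_eq_one
  have hCfin : C * CM ≠ ⊤ := ENNReal.mul_ne_top hC hCM
  refine ⟨(C * CM) ^ (r/p) + 1,
    ENNReal.add_ne_top.2 ⟨ENNReal.rpow_ne_top_of_nonneg (by positivity) hCfin, ENNReal.one_ne_top⟩,
    ?_⟩
  have hC'0 : ((C * CM) ^ (r/p) + 1 : ℝ≥0∞) ≠ 0 :=
    ne_of_gt (lt_of_lt_of_le zero_lt_one le_add_self)
  intro f
  set F : (Fin n → ℝ) → ℝ≥0∞ := fun x => ∑' j, MROrlicz Φ (f j) x ^ q with hF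
  set G : (Fin n → ℝ) → ℝ≥0∞ := fun x => ∑' j, ENNReal.ofReal |f j x| ^ q with hG
  show (∫⁻ x, F x ^ (p/q)) ^ (1/p) ≤ _ * (∫⁻ x, G x ^ (p/q)) ^ (1/p)
  rw [← hr]
  set A : ℝ≥0∞ := ∫⁻ x, G x ^ r with hA
  by_cases hAtop : A = ⊤
  · rw [hAtop, ENNReal.top_rpow_of_pos (by positivity), ENNReal.mul_top hC'0]
    exact le_top
  -- measurability
  have hMOmeas : ∀ g : (Fin n → ℝ) → ℝ, Measurable (MROrlicz Φ g) := fun g =>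
    measurable_maximal _
  have hMSmeas : ∀ g : (Fin n → ℝ) → ℝ, Measurable (MRstrong g) := fun g =>
    measurable_maximal _
  have hFmeas : Measurable F := Measurable.ennreal_tsum fun j => (hMOmeas (f j)).pow_const q
  -- key estimate for truncations
  have key : ∀ T : (Fin n → ℝ) → ℝ≥0∞, Measurable T → (∀ x, T x ≤ F x) →
      (∫⁻ x, T x ^ r) ≠ 0 → (∫⁻ x, T x ^ r) ≠ ⊤ → (∀ x, T x ≠ ⊤) →
      (∫⁻ x, T x ^ r) ^ (1/r) ≤ C * A ^ (1/r) * CM := by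
    intro T hTm hTle ht0 httop hTfin
    set t := ∫⁻ x, T x ^ r with htdef
    have ht1 : t ^ (1/(r/(r-1))) ≠ 0 := by
      rw [Ne, ENNReal.rpow_eq_zero_iff]
      rintro (⟨h, -⟩ | ⟨h, -⟩)
      exacts [ht0 h, httop h]
    have ht2 : t ^ (1/(r/(r-1))) ≠ ⊤ := ENNReal.rpow_ne_top_of_nonneg (by positivity) httop
    set κ : ℝ≥0∞ := (t ^ (1/(r/(r-1))))⁻¹ with hκdef
    have hκ0 : κ ≠ 0 := ENNReal.inv_ne_zero.2 ht2
    have hκtop : κ ≠ ⊤ := ENNReal.inv_ne_top.2 ht1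
    have hκr : κ ^ (r/(r-1)) = t⁻¹ := by
      rw [hκdef, ENNReal.inv_rpow, ← ENNReal.rpow_mul, one_div,
        inv_mul_cancel₀ hr'0.ne', ENNReal.rpow_one]
    set g : (Fin n → ℝ) → ℝ := fun x => (T x ^ (r-1) * κ).toReal with hg
    have hgnn : ∀ x, 0 ≤ g x := fun x => ENNReal.toReal_nonneg
    have hufin : ∀ x, T x ^ (r-1) * κ ≠ ⊤ := fun x =>
      ENNReal.mul_ne_top (ENNReal.rpow_ne_top_of_nonneg (by linarith) (hTfin x)) hκtop
    have hgof : ∀ x, ENNReal.ofReal (g x) = T x ^ (r-1) * κ := fun x =>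
      ENNReal.ofReal_toReal (hufin x)
    have hgm : Measurable fun x => ENNReal.ofReal (g x) := by
      simp only [hgof]
      exact (hTm.pow_const _).mul_const κ
    have hTr : Measurable fun x => T x ^ r := hTm.pow_const r
    have hnorm : ∫⁻ x, ENNReal.ofReal (g x) ^ (r/(r-1)) = 1 := by
      have hpt : ∀ x, ENNReal.ofReal (g x) ^ (r/(r-1)) = T x ^ r * κ ^ (r/(r-1)) := by
        intro x
        rw [hgof, ENNReal.mul_rpow_of_nonneg _ _ hr'0.le, ← ENNReal.rpow_mul]
        congr 2
        rw [mul_comm, div_mul_cancel₀ _ (by linarith : r - 1 ≠ 0)]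
      simp only [hpt]
      rw [lintegral_mul_const _ hTr, hκr, ← htdef, ENNReal.mul_inv_cancel ht0 httop]
    -- the lower bound ∫ T g = t^{1/r}
    have hlow : ∫⁻ x, T x * ENNReal.ofReal (g x) = t ^ (1/r) := by
      have hpt : ∀ x, T x * ENNReal.ofReal (g x) = T x ^ r * κ := by
        intro x
        rw [hgof, ← mul_assoc]
        congr 1
        by_cases h0 : T x = 0
        · rw [h0]
          simp [ENNReal.zero_rpow_of_pos hr0,
            ENNReal.zero_rpow_of_pos (by linarith : (0:ℝ) < r - 1)]
        · have h1 : T x * T x ^ (r-1) = T x ^ (1 + (r-1)) := by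
            rw [ENNReal.rpow_add _ _ h0 (hTfin x), ENNReal.rpow_one]
          rw [h1]
          congr 1
          ring
      simp only [hpt]
      rw [lintegral_mul_const _ hTr, ← htdef]
      have hsplit : t ^ (1/r) * t ^ (1/(r/(r-1))) = t := by
        rw [← ENNReal.rpow_add _ _ ht0 httop, hinvsum, ENNReal.rpow_one]
      calc t * κ = t ^ (1/r) * t ^ (1/(r/(r-1))) * κ := by rw [hsplit]
        _ = t ^ (1/r) := by
            rw [mul_assoc, hκdef, ENNReal.mul_inv_cancel ht1 ht2, mul_one]
    -- Fefferman-Stein chain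
    have hchain : ∫⁻ x, F x * ENNReal.ofReal (g x) ≤ C * ∫⁻ x, G x * MRstrong g x := by
      have hswap : ∫⁻ x, F x * ENNReal.ofReal (g x)
          = ∑' j, ∫⁻ x, MROrlicz Φ (f j) x ^ q * ENNReal.ofReal (g x) := by
        rw [← lintegral_tsum (f := fun j x => MROrlicz Φ (f j) x ^ q * ENNReal.ofReal (g x))
          (fun j => (((hMOmeas (f j)).pow_const q).mul hgm).aemeasurable)]
        refine lintegral_congr fun x => ?_
        rw [hF]
        exact ENNReal.tsum_mul_right.symm
      rw [hswap]
      calc ∑' j, ∫⁻ x, MROrlicz Φ (f j) x ^ q * ENNReal.ofReal (g x)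
          ≤ ∑' j, C * ∫⁻ x, ENNReal.ofReal |f j x| ^ q * MRstrong g x :=
            ENNReal.tsum_le_tsum fun j => hFS g hgnn hnorm (f j)
        _ = C * ∑' j, ∫⁻ x, ENNReal.ofReal |f j x| ^ q * MRstrong g x :=
            ENNReal.tsum_mul_left
        _ ≤ C * ∫⁻ x, G x * MRstrong g x := by
            refine mul_le_mul_right ?_ C
            refine (tsum_lintegral_le' volume
              (fun j x => ENNReal.ofReal |f j x| ^ q * MRstrong g x)).trans_eq ?_
            refine lintegral_congr fun x => ?_
            rw [hG]
            exact ENNReal.tsum_mul_right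
    -- bound on the maximal function of g
    have hMgnorm : (∫⁻ x, MRstrong g x ^ (r/(r-1))) ^ (1/(r/(r-1))) ≤ CM := by
      have hmr := hMR g
      have habs : ∀ x, ENNReal.ofReal |g x| = ENNReal.ofReal (g x) := fun x => by
        rw [abs_of_nonneg (hgnn x)]
      simp only [habs] at hmr
      rw [hnorm, ENNReal.one_rpow, mul_one] at hmr
      have hexp : (r - 1) / r = 1/(r/(r-1)) := by
        rw [one_div_div]
      rwa [hexp] at hmr
    have hMgint : ∫⁻ x, MRstrong g x ^ (r/(r-1)) ≤ CM ^ (r/(r-1)) := by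
      have h2 := ENNReal.rpow_le_rpow hMgnorm hr'0.le
      rwa [← ENNReal.rpow_mul, one_div, inv_mul_cancel₀ hr'0.ne', ENNReal.rpow_one] at h2
    have hMgfin : ∀ᵐ x ∂(volume : Measure (Fin n → ℝ)), MRstrong g x ≠ ⊤ := by
      have hfin' : (∫⁻ x, MRstrong g x ^ (r/(r-1))) ≠ ⊤ :=
        (lt_of_le_of_lt hMgint (ENNReal.rpow_lt_top_of_nonneg hr'0.le hCM)).ne
      have hlt := ae_lt_top ((hMSmeas g).pow_const (r/(r-1))) hfin'
      filter_upwards [hlt] with x hx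
      intro hxt
      rw [hxt, ENNReal.top_rpow_of_pos hr'0] at hx
      exact (lt_irrefl _ hx)
    -- replace MRstrong g by a finite modification
    set M' : (Fin n → ℝ) → ℝ≥0∞ := fun x => if MRstrong g x = ⊤ then 0 else MRstrong g x
      with hM'
    have hM'm : Measurable M' :=
      Measurable.ite (hMSmeas g (measurableSet_singleton ⊤)) measurable_const (hMSmeas g)
    have hM'fin : ∀ x, M' x ≠ ⊤ := by
      intro x
      rw [hM']
      by_cases hx : MRstrong g x = ⊤
      · simp [hx]
      · simp [hx]
    have hM'le : ∀ x, M' x ≤ MRstrong g x := by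
      intro x
      rw [hM']
      by_cases hx : MRstrong g x = ⊤ <;> simp [hx]
    have hmod : ∫⁻ x, G x * MRstrong g x = ∫⁻ x, G x * M' x := by
      refine lintegral_congr_ae ?_
      filter_upwards [hMgfin] with x hx
      rw [hM']
      simp [hx]
    have hGM : ∫⁻ x, G x * MRstrong g x ≤ A ^ (1/r) * CM := by
      rw [hmod]
      refine (holder_general volume hconj G M' hM'm hM'fin).trans ?_
      refine mul_le_mul' le_rfl ?_
      have h1 : ∫⁻ x, M' x ^ (r/(r-1)) ≤ CM ^ (r/(r-1)) := by
        refine le_trans (lintegral_mono fun x => ?_) hMgint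
        exact ENNReal.rpow_le_rpow (hM'le x) hr'0.le
      have h2 := ENNReal.rpow_le_rpow h1 (by positivity : (0:ℝ) ≤ 1/(r/(r-1)))
      rwa [← ENNReal.rpow_mul, mul_one_div, div_self hr'0.ne', ENNReal.rpow_one] at h2
    -- combine
    calc t ^ (1/r) = ∫⁻ x, T x * ENNReal.ofReal (g x) := hlow.symm
      _ ≤ ∫⁻ x, F x * ENNReal.ofReal (g x) :=
          lintegral_mono fun x => mul_le_mul_left (hTle x) _
      _ ≤ C * ∫⁻ x, G x * MRstrong g x := hchain
      _ ≤ C * (A ^ (1/r) * CM) := mul_le_mul_right hGM C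
      _ = C * A ^ (1/r) * CM := by rw [mul_assoc]
  -- truncations
  set T : ℕ → (Fin n → ℝ) → ℝ≥0∞ := fun k x =>
    min (F x) (k : ℝ≥0∞) * (Metric.ball (0 : Fin n → ℝ) k).indicator 1 x with hT
  have hTm : ∀ k, Measurable (T k) := fun k =>
    (hFmeas.min measurable_const).mul (measurable_one.indicator Metric.isOpen_ball.measurableSet)
  have hTmono : Monotone T := by
    intro k l hkl x
    refine mul_le_mul' (min_le_min le_rfl (by exact_mod_cast Nat.cast_le.2 hkl)) ?_
    exact Set.indicator_le_indicator_of_subset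
      (Metric.ball_subset_ball (by exact_mod_cast hkl)) (fun y => zero_le) x
  have hindle : ∀ (k : ℕ) x, (Metric.ball (0 : Fin n → ℝ) k).indicator
      (1 : (Fin n → ℝ) → ℝ≥0∞) x ≤ 1 := by
    intro k x
    by_cases hx : x ∈ Metric.ball (0 : Fin n → ℝ) (k:ℝ)
    · rw [Set.indicator_of_mem hx]; exact le_rfl
    · rw [Set.indicator_of_notMem hx]; exact zero_le
  have hTleF : ∀ k x, T k x ≤ F x := by
    intro k x
    calc T k x ≤ min (F x) k * 1 := mul_le_mul' le_rfl (hindle k x)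
      _ = min (F x) k := mul_one _
      _ ≤ F x := min_le_left _ _
  have hTfin : ∀ k x, T k x ≠ ⊤ := by
    intro k x
    refine ne_top_of_le_ne_top (ENNReal.natCast_ne_top k) ?_
    calc T k x ≤ min (F x) k * 1 := mul_le_mul' le_rfl (hindle k x)
      _ = min (F x) k := mul_one _
      _ ≤ k := min_le_right _ _
  have hTtop : ∀ k, (∫⁻ x, T k x ^ r) ≠ ⊤ := by
    intro k
    have hb : ∀ x, T k x ^ r ≤ (Metric.ball (0 : Fin n → ℝ) k).indicator
        (fun _ => (k : ℝ≥0∞) ^ r) x := by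
      intro x
      by_cases hx : x ∈ Metric.ball (0 : Fin n → ℝ) (k:ℝ)
      · rw [Set.indicator_of_mem hx]
        refine ENNReal.rpow_le_rpow ?_ hr0.le
        calc T k x ≤ min (F x) k * 1 := mul_le_mul' le_rfl (hindle k x)
          _ = min (F x) k := mul_one _
          _ ≤ k := min_le_right _ _
      · rw [Set.indicator_of_notMem hx]
        have hz : T k x = 0 := by rw [hT]; simp [Set.indicator_of_notMem hx]
        rw [hz, ENNReal.zero_rpow_of_pos hr0]
    refine ne_top_of_le_ne_top ?_ (lintegral_mono hb)
    rw [lintegral_indicator_const Metric.isOpen_ball.measurableSet]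
    exact ENNReal.mul_ne_top (ENNReal.rpow_ne_top_of_nonneg hr0.le (ENNReal.natCast_ne_top k))
      measure_ball_lt_top.ne
  have hsup : ∀ x, ⨆ k, T k x = F x := by
    intro x
    refine le_antisymm (iSup_le fun k => hTleF k x) ?_
    refine le_of_forall_lt fun a ha => ?_
    obtain ⟨k0, hk0⟩ := exists_nat_gt (dist x 0)
    obtain ⟨k1, hk1⟩ := ENNReal.exists_nat_gt ha.ne_top
    refine lt_of_lt_of_le ?_ (le_iSup _ (max k0 k1))
    have hxball : x ∈ Metric.ball (0 : Fin n → ℝ) ((max k0 k1 : ℕ) : ℝ) := by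
      rw [Metric.mem_ball]
      refine lt_of_lt_of_le hk0 ?_
      exact_mod_cast le_max_left k0 k1
    rw [hT]
    simp only [Set.indicator_of_mem hxball, Pi.one_apply, mul_one]
    rw [lt_min_iff]
    constructor
    · exact ha
    · refine lt_of_lt_of_le hk1 ?_
      exact_mod_cast le_max_right k0 k1
  -- monotone convergence
  have hmct : (∫⁻ x, F x ^ r) = ⨆ k, ∫⁻ x, T k x ^ r := by
    have hpt : ∀ x, F x ^ r = ⨆ k, T k x ^ r := by
      intro x
      rw [← hsup x]
      exact Monotone.map_iSup_of_continuousAt ENNReal.continuous_rpow_const.continuousAt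
        (fun a b hab => ENNReal.rpow_le_rpow hab hr0.le)
        (by simp [ENNReal.zero_rpow_of_pos hr0])
    simp only [hpt]
    exact lintegral_iSup (fun k => (hTm k).pow_const r)
      (fun k l hkl x => ENNReal.rpow_le_rpow (hTmono hkl x) hr0.le)
  have hBle : (∫⁻ x, F x ^ r) ≤ (C * CM) ^ r * A := by
    rw [hmct]
    refine iSup_le fun k => ?_
    by_cases h0 : (∫⁻ x, T k x ^ r) = 0
    · rw [h0]; exact zero_le
    · have hk := key (T k) (hTm k) (hTleF k) h0 (hTtop k) (hTfin k)
      have hk2 : (∫⁻ x, T k x ^ r) ^ (1/r) ≤ (C * CM) * A ^ (1/r) :=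
        hk.trans_eq (by ring)
      have hArr : (A ^ (1/r)) ^ r = A := by
        rw [← ENNReal.rpow_mul, one_div, inv_mul_cancel₀ hr0.ne', ENNReal.rpow_one]
      have hTrr : ((∫⁻ x, T k x ^ r) ^ (1/r)) ^ r = ∫⁻ x, T k x ^ r := by
        rw [← ENNReal.rpow_mul, one_div, inv_mul_cancel₀ hr0.ne', ENNReal.rpow_one]
      calc ∫⁻ x, T k x ^ r = (((∫⁻ x, T k x ^ r) ^ (1/r))) ^ r := hTrr.symm
        _ ≤ ((C * CM) * A ^ (1/r)) ^ r := ENNReal.rpow_le_rpow hk2 hr0.le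
        _ = (C * CM) ^ r * A := by rw [ENNReal.mul_rpow_of_nonneg _ _ hr0.le, hArr]
  -- conclude
  have h3 := ENNReal.rpow_le_rpow hBle (by positivity : (0:ℝ) ≤ 1/p)
  rw [ENNReal.mul_rpow_of_nonneg _ _ (by positivity : (0:ℝ) ≤ 1/p)] at h3
  refine h3.trans ?_
  refine mul_le_mul_left ?_ _
  rw [← ENNReal.rpow_mul]
  calc (C * CM) ^ (r * (1/p)) = (C * CM) ^ (r/p) := by rw [mul_one_div]
    _ ≤ (C * CM) ^ (r/p) + 1 := le_self_add
end
end

section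
/- Let 0 ≤ α < mn, 1 < p₁,…,p_m < ∞ with 1/p = Σ 1/p_i, and 0 < p ≤ q < ∞ with 1/q = 1/p − α/n. If the multilinear fractional strong maximal operator 𝓜_{𝓡,α} is bounded from L^{p₁}(w₁^{p₁}) × ⋯ × L^{p_m}(w_m^{p_m}) to L^q(ν_𝐰^q), where ν_𝐰 = ∏ w_i, then the weight vector 𝐰 = (w₁,…,w_m) satisfies the A_{(𝐩,q),𝓡} condition: sup_R (|R|^{−1}∫_R ν_𝐰^q)^{1/q} ∏_{i=1}^m (|R|^{−1}∫_R w_i^{−p_i'})^{1/p_i'} < ∞. -/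
/-!
Test the boundedness on `fᵢ = 1_R σᵢ` with `σᵢ = (wᵢ + ε)^{-pᵢ'}`. On `R` the maximal function is
at least `|R|^{α/n - m} ∏ᵢ ∫_R σᵢ`, while `(σᵢ wᵢ)^{pᵢ} ≤ σᵢ` because `(1 - pᵢ') pᵢ = -pᵢ'`.
Since `1/q + ∑ᵢ 1/pᵢ' = m - α/n`, dividing the resulting inequality by the finite factor
`∏ᵢ (∫_R σᵢ)^{1/pᵢ}` gives the `A_{(𝐩,q),𝓡}` bound with `σᵢ` in place of `wᵢ^{-pᵢ'}`.
The regularization `ε > 0` is what makes `∫_R σᵢ` finite; monotone convergence as `ε = 1/k → 0`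
removes it.
-/

open MeasureTheory Set
open scoped ENNReal

noncomputable section

/-- The multilinear fractional strong maximal operator
`𝓜_{𝓡,α}(f)(x) = sup_{R∋x} ∏ᵢ |R|^{α/(mn)-1} ∫_R fᵢ`. -/
def MRalpha {n m : ℕ} (α : ℝ) (f : Fin m → (Fin n → ℝ) → ℝ≥0∞)
    (x : Fin n → ℝ) : ℝ≥0∞ :=
  ⨆ (R : Set (Fin n → ℝ)) (_ : IsRect R ∧ x ∈ R),
    ∏ i, (volume R) ^ (α / (m * n) - 1) * ∫⁻ y in R, f i y

namespace ENNReal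

theorem rpow_le_rpow_of_nonpos {x y : ℝ≥0∞} {z : ℝ} (hxy : x ≤ y) (hz : z ≤ 0) :
    y ^ z ≤ x ^ z := by
  rw [← neg_neg z, rpow_neg x, rpow_neg y]
  exact ENNReal.inv_le_inv' (rpow_le_rpow hxy (neg_nonneg.mpr hz))

theorem prod_rpow_eq_rpow_sum {ι : Type*} (s : Finset ι) {x : ℝ≥0∞} (hx0 : x ≠ 0) (hxt : x ≠ ⊤)
    (f : ι → ℝ) : ∏ i ∈ s, x ^ f i = x ^ ∑ i ∈ s, f i := by
  classical
  induction s using Finset.induction_on with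
  | empty => simp
  | insert c s hc ih => rw [Finset.prod_insert hc, Finset.sum_insert hc, ih, rpow_add _ _ hx0 hxt]

theorem iSup_mul_iSup_of_monotone {ι : Type*} [Preorder ι] [IsDirectedOrder ι]
    {f g : ι → ℝ≥0∞} (hf : Monotone f) (hg : Monotone g) :
    (⨆ i, f i) * ⨆ i, g i = ⨆ i, f i * g i := by
  refine le_antisymm ?_ (iSup_le fun i => mul_le_mul' (le_iSup f i) (le_iSup g i))
  simp_rw [iSup_mul, mul_iSup]
  refine iSup₂_le fun i j => ?_
  obtain ⟨k, hik, hjk⟩ := exists_ge_ge i j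
  exact le_iSup_of_le k (mul_le_mul' (hf hik) (hg hjk))

theorem prod_iSup_of_monotone {α ι : Type*} [Preorder ι] [IsDirectedOrder ι] [Nonempty ι]
    (s : Finset α) {f : α → ι → ℝ≥0∞} (hf : ∀ a, Monotone (f a)) :
    ∏ a ∈ s, ⨆ i, f a i = ⨆ i, ∏ a ∈ s, f a i := by
  induction s using Finset.cons_induction with
  | empty => simp
  | cons a s ha ih =>
    simp_rw [Finset.prod_cons, ih]
    exact iSup_mul_iSup_of_monotone (hf a) fun i j hij =>
      Finset.prod_le_prod' fun b _ => hf b hij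

theorem prod_rpow_mul_iSup_of_monotone {α ι : Type*} [Preorder ι] [IsDirectedOrder ι]
    [Nonempty ι] (s : Finset α) (b : ℝ≥0∞) {e : α → ℝ} (he : ∀ a, 0 ≤ e a)
    {f : α → ι → ℝ≥0∞} (hf : ∀ a, Monotone (f a)) :
    ∏ a ∈ s, (b * ⨆ i, f a i) ^ e a = ⨆ i, ∏ a ∈ s, (b * f a i) ^ e a := by
  rw [← prod_iSup_of_monotone s (f := fun a i => (b * f a i) ^ e a) fun a i j hij =>
    rpow_le_rpow (mul_le_mul_right (hf a hij) b) (he a)]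
  refine Finset.prod_congr rfl fun a _ => ?_
  rw [mul_iSup]
  exact (monotone_rpow_of_nonneg (he a)).map_ciSup_of_continuousAt
    continuous_rpow_const.continuousAt

theorem rpow_neg_mul_rpow_le {p q : ℝ} (hpq : p.HolderConjugate q) {s t : ℝ≥0∞} (hst : s ≤ t) :
    (t ^ (-q) * s) ^ p ≤ t ^ (-q) := by
  rcases eq_or_ne t 0 with rfl | ht0
  · simp [nonpos_iff_eq_zero.mp hst, zero_rpow_of_pos hpq.pos]
  rcases eq_or_ne t ⊤ with rfl | htt
  · simp [top_rpow_of_neg (neg_neg_of_pos hpq.symm.pos), zero_rpow_of_pos hpq.pos]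
  calc (t ^ (-q) * s) ^ p ≤ (t ^ (-q) * t) ^ p := rpow_le_rpow (by gcongr) hpq.nonneg
    _ = t ^ (-q) := by
      rw [show t ^ (-q) * t = t ^ (-q + 1) by rw [rpow_add _ _ ht0 htt, rpow_one], ← rpow_mul]
      congr 1
      linear_combination -hpq.mul_eq_add

theorem rpow_mul_prod_rpow_le_of_mul_le {ι : Type*} [Fintype ι] {V I C : ℝ≥0∞}
    {A : ι → ℝ≥0∞} {r β : ℝ} {e : ι → ℝ} (hV0 : V ≠ 0) (hVt : V ≠ ⊤) (hA : ∀ i, A i ≠ ⊤)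
    (hr : 0 ≤ r) (he0 : ∀ i, 0 ≤ e i) (he1 : ∀ i, e i < 1)
    (hβ : Fintype.card ι * β = -(r + ∑ i, (1 - e i)))
    (h : (∏ i, V ^ β * A i) * I ^ r ≤ C * ∏ i, A i ^ e i) :
    (V⁻¹ * I) ^ r * ∏ i, (V⁻¹ * A i) ^ (1 - e i) ≤ C := by
  by_cases hA0 : ∃ i, A i = 0
  · obtain ⟨i, hi⟩ := hA0
    rw [Finset.prod_eq_zero (Finset.mem_univ i)
      (by rw [hi, mul_zero, zero_rpow_of_pos (sub_pos.2 (he1 i))]), mul_zero]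
    exact zero_le
  push Not at hA0
  have hP0 : ∏ i, A i ^ e i ≠ 0 := Finset.prod_ne_zero_iff.2 fun i _ =>
    (rpow_pos_of_nonneg (pos_iff_ne_zero.2 (hA0 i)) (he0 i)).ne'
  have hPt : ∏ i, A i ^ e i ≠ ⊤ := prod_ne_top fun i _ => rpow_ne_top_of_nonneg (he0 i) (hA i)
  refine (ENNReal.mul_le_mul_iff_left hP0 hPt).1 (le_of_eq_of_le ?_ h)
  have hVi0 : V⁻¹ ≠ 0 := ENNReal.inv_ne_zero.2 hVt
  have hVit : V⁻¹ ≠ ⊤ := inv_ne_top.2 hV0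
  have hVpow : V⁻¹ ^ r * V⁻¹ ^ ∑ i, (1 - e i) = V ^ (Fintype.card ι * β) := by
    rw [← rpow_add _ _ hVi0 hVit, inv_rpow, ← rpow_neg, hβ]
  have hA_split : ∀ i, A i ^ (1 - e i) * A i ^ e i = A i := fun i => by
    rw [← rpow_add_of_nonneg _ _ (sub_nonneg.2 (he1 i).le) (he0 i), sub_add_cancel, rpow_one]
  calc (V⁻¹ * I) ^ r * (∏ i, (V⁻¹ * A i) ^ (1 - e i)) * ∏ i, A i ^ e i
      = (V⁻¹ ^ r * ∏ i, V⁻¹ ^ (1 - e i)) * ((∏ i, A i ^ (1 - e i)) * ∏ i, A i ^ e i) * I ^ r := by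
        simp_rw [mul_rpow_of_nonneg _ _ hr,
          mul_rpow_of_nonneg _ _ (sub_nonneg.2 (he1 _).le), Finset.prod_mul_distrib]
        ring
    _ = (∏ i, V ^ β * A i) * I ^ r := by
        rw [prod_rpow_eq_rpow_sum _ hVi0 hVit, hVpow, ← Finset.prod_mul_distrib]
        simp_rw [hA_split]
        rw [Finset.prod_mul_distrib, Finset.prod_const, Finset.card_univ, ← rpow_natCast,
          ← rpow_mul, mul_comm β]

theorem monotone_add_inv_natCast_rpow (a : ℝ≥0∞) {z : ℝ} (hz : z ≤ 0) :
    Monotone fun k : ℕ => (a + (k : ℝ≥0∞)⁻¹) ^ z := fun _ _ hkl =>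
  rpow_le_rpow_of_nonpos (add_le_add_right (ENNReal.inv_le_inv' (Nat.cast_le.2 hkl)) a) hz

theorem iSup_add_inv_natCast_rpow (a : ℝ≥0∞) {z : ℝ} (hz : z ≤ 0) :
    ⨆ k : ℕ, (a + (k : ℝ≥0∞)⁻¹) ^ z = a ^ z := by
  refine iSup_eq_of_tendsto (monotone_add_inv_natCast_rpow a hz)
    (Filter.Tendsto.ennrpow_const z ?_)
  simpa using ENNReal.tendsto_inv_nat_nhds_zero.const_add a

end ENNReal

section Regularization

variable {X : Type*} [MeasurableSpace X] (μ : Measure X) {f : X → ℝ≥0∞} {z : ℝ}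

theorem iSup_lintegral_add_inv_natCast_rpow (hf : Measurable f) (hz : z ≤ 0) :
    ⨆ k : ℕ, ∫⁻ x, (f x + (k : ℝ≥0∞)⁻¹) ^ z ∂μ = ∫⁻ x, f x ^ z ∂μ := by
  rw [← lintegral_iSup (fun k => (hf.add_const _).pow_const z)
    fun _ _ hkl x => ENNReal.monotone_add_inv_natCast_rpow (f x) hz hkl]
  simp_rw [ENNReal.iSup_add_inv_natCast_rpow _ hz]

theorem monotone_lintegral_add_inv_natCast_rpow (hz : z ≤ 0) :
    Monotone fun k : ℕ => ∫⁻ x, (f x + (k : ℝ≥0∞)⁻¹) ^ z ∂μ := fun _ _ hkl =>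
  lintegral_mono fun x => ENNReal.monotone_add_inv_natCast_rpow (f x) hz hkl

theorem setLIntegral_add_rpow_ne_top {s : Set X} (hs : μ s ≠ ⊤) {ε : ℝ≥0∞} (hε : ε ≠ 0)
    (hz : z ≤ 0) : ∫⁻ x in s, (f x + ε) ^ z ∂μ ≠ ⊤ := by
  have hεz : ε ^ z ≠ ⊤ := by
    rw [← neg_neg z, ENNReal.rpow_neg, ← ENNReal.inv_rpow]
    exact ENNReal.rpow_ne_top_of_nonneg (neg_nonneg.2 hz) (ENNReal.inv_ne_top.2 hε)
  refine ne_top_of_le_ne_top (ENNReal.mul_ne_top hεz hs) ?_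
  calc ∫⁻ x in s, (f x + ε) ^ z ∂μ ≤ ∫⁻ _ in s, ε ^ z ∂μ :=
        lintegral_mono fun x => ENNReal.rpow_le_rpow_of_nonpos le_add_self hz
    _ = ε ^ z * μ s := setLIntegral_const s _

end Regularization

namespace IsRect

variable {n : ℕ} {R : Set (Fin n → ℝ)}

theorem measurableSet (hR : IsRect R) : MeasurableSet R := by
  obtain ⟨a, b, -, rfl⟩ := hR
  exact MeasurableSet.univ_pi fun i => measurableSet_Ioo

theorem volume_eq (hR : IsRect R) : ∃ a b : Fin n → ℝ, (∀ i, a i < b i) ∧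
    volume R = ∏ i, ENNReal.ofReal (b i - a i) := by
  obtain ⟨a, b, hab, rfl⟩ := hR
  exact ⟨a, b, hab, by simp [volume_pi_pi, Real.volume_Ioo]⟩

theorem volume_ne_zero (hR : IsRect R) : volume R ≠ 0 := by
  obtain ⟨a, b, hab, hV⟩ := hR.volume_eq
  rw [hV]
  exact Finset.prod_ne_zero_iff.2 fun i _ => (ENNReal.ofReal_pos.2 (sub_pos.2 (hab i))).ne'

theorem volume_ne_top (hR : IsRect R) : volume R ≠ ⊤ := by
  obtain ⟨a, b, -, hV⟩ := hR.volume_eq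
  rw [hV]
  exact ENNReal.prod_ne_top fun i _ => ENNReal.ofReal_ne_top

end IsRect

theorem le_MRalpha_of_mem {n m : ℕ} (α : ℝ) (f : Fin m → (Fin n → ℝ) → ℝ≥0∞)
    {R : Set (Fin n → ℝ)} (hR : IsRect R) {x : Fin n → ℝ} (hx : x ∈ R) :
    ∏ i, volume R ^ (α / (m * n) - 1) * ∫⁻ y in R, f i y ≤ MRalpha α f x :=
  le_iSup₂_of_le (f := fun R (_ : IsRect R ∧ x ∈ R) =>
    ∏ i, volume R ^ (α / (m * n) - 1) * ∫⁻ y in R, f i y) R ⟨hR, hx⟩ le_rfl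

def MRalphaBoundedWith {n m : ℕ} (α q : ℝ) (pv : Fin m → ℝ) (w : Fin m → (Fin n → ℝ) → ℝ≥0∞)
    (C : ℝ≥0∞) : Prop :=
  ∀ f : Fin m → (Fin n → ℝ) → ℝ≥0∞, (∀ i, Measurable (f i)) →
    (∫⁻ x, (MRalpha α f x * ∏ i, w i x) ^ q) ^ (1 / q) ≤
      C * ∏ i, (∫⁻ x, (f i x * w i x) ^ (pv i)) ^ (1 / pv i)

namespace MRalphaBoundedWith

variable {n m : ℕ} {α q : ℝ} {pv : Fin m → ℝ} {w : Fin m → (Fin n → ℝ) → ℝ≥0∞} {C : ℝ≥0∞}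
  {R : Set (Fin n → ℝ)}

theorem mul_le_of_isRect (hB : MRalphaBoundedWith α q pv w C) (hq : 0 < q)
    (hpv : ∀ i, 0 < pv i) (hR : IsRect R) {g : Fin m → (Fin n → ℝ) → ℝ≥0∞}
    (hg : ∀ i, Measurable (g i)) :
    (∏ i, volume R ^ (α / (m * n) - 1) * ∫⁻ y in R, g i y) *
        (∫⁻ x in R, (∏ i, w i x) ^ q) ^ (1 / q) ≤
      C * ∏ i, (∫⁻ x in R, (g i x * w i x) ^ pv i) ^ (1 / pv i) := by
  set K := ∏ i, volume R ^ (α / (m * n) - 1) * ∫⁻ y in R, g i y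
  set f := fun i => R.indicator (g i)
  have hK : ∀ x ∈ R, K ≤ MRalpha α f x := fun x hx => by
    convert le_MRalpha_of_mem α f hR hx using 3 with i
    rw [setLIntegral_indicator hR.measurableSet, inter_self]
  have hf : ∀ i, ∫⁻ x, (f i x * w i x) ^ pv i = ∫⁻ x in R, (g i x * w i x) ^ pv i := fun i => by
    rw [← lintegral_indicator hR.measurableSet]
    refine lintegral_congr fun x => ?_
    by_cases hx : x ∈ R
    · simp [f, hx]
    · simp [f, hx, ENNReal.zero_rpow_of_pos (hpv i)]
  have hq' : 0 ≤ 1 / q := by positivity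
  calc K * (∫⁻ x in R, (∏ i, w i x) ^ q) ^ (1 / q)
      = (K ^ q * ∫⁻ x in R, (∏ i, w i x) ^ q) ^ (1 / q) := by
        rw [ENNReal.mul_rpow_of_nonneg _ _ hq', ← ENNReal.rpow_mul, mul_one_div_cancel hq.ne',
          ENNReal.rpow_one]
    _ ≤ (∫⁻ x in R, (K * ∏ i, w i x) ^ q) ^ (1 / q) := by
        gcongr
        refine (lintegral_const_mul_le _ _).trans_eq (lintegral_congr fun x => ?_)
        rw [ENNReal.mul_rpow_of_nonneg _ _ hq.le]
    _ ≤ (∫⁻ x in R, (MRalpha α f x * ∏ i, w i x) ^ q) ^ (1 / q) := by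
        gcongr ?_ ^ _
        exact setLIntegral_mono' hR.measurableSet fun x hx => by gcongr; exact hK x hx
    _ ≤ (∫⁻ x, (MRalpha α f x * ∏ i, w i x) ^ q) ^ (1 / q) := by
        gcongr ?_ ^ _
        exact setLIntegral_le_lintegral _ _
    _ ≤ C * ∏ i, (∫⁻ x, (f i x * w i x) ^ pv i) ^ (1 / pv i) :=
        hB f fun i => (hg i).indicator hR.measurableSet
    _ = C * ∏ i, (∫⁻ x in R, (g i x * w i x) ^ pv i) ^ (1 / pv i) := by simp_rw [hf]

theorem apqAverage_add_le (hB : MRalphaBoundedWith α q pv w C) (hq : 0 < q)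
    (hpv : ∀ i, 1 < pv i) (hexp : (m : ℝ) * (α / (m * n) - 1) = -(1 / q + ∑ i, (1 - 1 / pv i)))
    (hw : ∀ i, Measurable (w i)) (hR : IsRect R) {ε : ℝ≥0∞} (hε : ε ≠ 0) :
    ((volume R)⁻¹ * ∫⁻ x in R, (∏ i, w i x) ^ q) ^ (1 / q) *
        ∏ i, ((volume R)⁻¹ * ∫⁻ x in R, (w i x + ε) ^ (-(pv i / (pv i - 1)))) ^ (1 - 1 / pv i) ≤
      C := by
  have hconj (i : Fin m) : (pv i).HolderConjugate (pv i / (pv i - 1)) :=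
    Real.HolderConjugate.conjExponent (hpv i)
  have hz (i : Fin m) : -(pv i / (pv i - 1)) ≤ 0 := neg_nonpos.2 (hconj i).symm.nonneg
  refine ENNReal.rpow_mul_prod_rpow_le_of_mul_le hR.volume_ne_zero hR.volume_ne_top
    (fun i => setLIntegral_add_rpow_ne_top _ hR.volume_ne_top hε (hz i))
    (by positivity) (fun i => (hconj i).one_div_nonneg)
    (fun i => (div_lt_one (hconj i).pos).2 (hpv i)) (by simpa using hexp) ?_
  calc _ ≤ C * ∏ i,
        (∫⁻ x in R, ((w i x + ε) ^ (-(pv i / (pv i - 1))) * w i x) ^ pv i) ^ (1 / pv i) :=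
        hB.mul_le_of_isRect hq (fun i => (hconj i).pos) hR
          fun i => ((hw i).add_const ε).pow_const _
    _ ≤ _ := by
        gcongr with i
        · exact (hconj i).one_div_nonneg
        · exact ENNReal.rpow_neg_mul_rpow_le (hconj i) le_self_add

end MRalphaBoundedWith

theorem stmt14_general (n m : ℕ) (hm : 1 ≤ m) (α : ℝ)
    (pv : Fin m → ℝ) (hpv : ∀ i, 1 < pv i)
    (p q : ℝ) (hp : 1 / p = ∑ i, 1 / pv i) (hq : 1 / q = 1 / p - α / n)
    (hp0 : 0 < p) (hpq : p ≤ q)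
    (w : Fin m → (Fin n → ℝ) → ℝ≥0∞) (hw : ∀ i, Measurable (w i))
    -- boundedness of 𝓜_{𝓡,α} from ∏ L^{p_i}(w_i^{p_i}) to L^q(ν_𝐰^q)
    (hbdd : ∃ C : ℝ≥0∞, C ≠ ⊤ ∧ ∀ f : Fin m → (Fin n → ℝ) → ℝ≥0∞,
      (∀ i, Measurable (f i)) →
      (∫⁻ x, (MRalpha α f x * ∏ i, w i x) ^ q) ^ (1 / q) ≤
        C * ∏ i, (∫⁻ x, (f i x * w i x) ^ (pv i)) ^ (1 / pv i)) :
    -- the A_{(𝐩,q),𝓡} condition; here -p_i' = -p_i/(p_i-1) and 1/p_i' = 1 - 1/p_i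
    ∃ C' : ℝ≥0∞, C' ≠ ⊤ ∧ ∀ R : Set (Fin n → ℝ), IsRect R →
      ((volume R)⁻¹ * ∫⁻ x in R, (∏ i, w i x) ^ q) ^ (1 / q) *
        ∏ i, ((volume R)⁻¹ *
          ∫⁻ x in R, w i x ^ (-(pv i / (pv i - 1)))) ^ (1 - 1 / pv i) ≤ C' := by
  obtain ⟨C, hC, hB⟩ := hbdd
  have hexp : (m : ℝ) * (α / (m * n) - 1) = -(1 / q + ∑ i, (1 - 1 / pv i)) := by
    have hm0 : (m : ℝ) ≠ 0 := Nat.cast_ne_zero.2 (by omega)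
    rw [hq, Finset.sum_sub_distrib, ← hp]
    simp only [Finset.sum_const, Finset.card_univ, Fintype.card_fin, nsmul_eq_mul, mul_one]
    field_simp
    ring
  have hz (i : Fin m) : -(pv i / (pv i - 1)) ≤ 0 :=
    neg_nonpos.2 (Real.HolderConjugate.conjExponent (hpv i)).symm.nonneg
  have he (i : Fin m) : 0 ≤ 1 - 1 / pv i :=
    sub_nonneg.2 ((div_le_one (zero_lt_one.trans (hpv i))).2 (hpv i).le)
  refine ⟨C, hC, fun R hR => ?_⟩
  simp_rw [← iSup_lintegral_add_inv_natCast_rpow _ (hw _) (hz _)]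
  rw [ENNReal.prod_rpow_mul_iSup_of_monotone _ _ he
    fun i => monotone_lintegral_add_inv_natCast_rpow _ (hz i), ENNReal.mul_iSup]
  exact iSup_le fun k => MRalphaBoundedWith.apqAverage_add_le hB (hp0.trans_le hpq) hpv hexp hw
    hR (ENNReal.inv_ne_zero.2 (ENNReal.natCast_ne_top k))

/-- Necessity of the `A_{(𝐩,q),𝓡}` condition for the boundedness of `𝓜_{𝓡,α}`. -/
theorem stmt14 (n m : ℕ) (hn : 1 ≤ n) (hm : 1 ≤ m)
    (α : ℝ) (hα0 : 0 ≤ α) (hα1 : α < m * n)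
    (pv : Fin m → ℝ) (hpv : ∀ i, 1 < pv i)
    (p q : ℝ) (hp : 1 / p = ∑ i, 1 / pv i) (hq : 1 / q = 1 / p - α / n)
    (hp0 : 0 < p) (hpq : p ≤ q)
    (w : Fin m → (Fin n → ℝ) → ℝ≥0∞) (hw : ∀ i, Measurable (w i))
    -- boundedness of 𝓜_{𝓡,α} from ∏ L^{p_i}(w_i^{p_i}) to L^q(ν_𝐰^q)
    (hbdd : ∃ C : ℝ≥0∞, C ≠ ⊤ ∧ ∀ f : Fin m → (Fin n → ℝ) → ℝ≥0∞,
      (∀ i, Measurable (f i)) →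
      (∫⁻ x, (MRalpha α f x * ∏ i, w i x) ^ q) ^ (1 / q) ≤
        C * ∏ i, (∫⁻ x, (f i x * w i x) ^ (pv i)) ^ (1 / pv i)) :
    -- the A_{(𝐩,q),𝓡} condition; here -p_i' = -p_i/(p_i-1) and 1/p_i' = 1 - 1/p_i
    ∃ C' : ℝ≥0∞, C' ≠ ⊤ ∧ ∀ R : Set (Fin n → ℝ), IsRect R →
      ((volume R)⁻¹ * ∫⁻ x in R, (∏ i, w i x) ^ q) ^ (1 / q) *
        ∏ i, ((volume R)⁻¹ *
          ∫⁻ x in R, w i x ^ (-(pv i / (pv i - 1)))) ^ (1 - 1 / pv i) ≤ C' :=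
  stmt14_general n m hm α pv hpv p q hp hq hp0 hpq w hw hbdd

end
end
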